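/- arXiv:1805.02156 — 4 statements merged into one kernel-verified Lean document; each statement's English description precedes it below -/
import Mathlib

section
/- Let t ≥ 1 and d ≥ 3, and let G be a finite tree of maximum degree at most d. Then the distance-t chromatic index of G is at most τ'_t(d), where τ'_t(d) = (2(d-1)^{t/2+1} - d)/(d-2) if t is even and τ'_t(d) = (d(d-1)^{(t+1)/2} - d)/(d-2) if t is odd. -/
/-!
Root the tree at a vertex `r` of degree at most one, so that every vertex has at most `d - 1`
children, and send each edge to its endpoint farther from `r`; this is injective. Colour the edges
greedily by increasing depth of that endpoint. When the edge with lower endpoint `v` is coloured,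
the lower endpoint `y ≠ v` of every earlier conflicting edge lies within distance `t` of `v` and is
no deeper than `v`. A shortest path from `v` to such a `y` at distance `m` first climbs `a ≥ m / 2`
levels and then descends `m - a` levels into a branch other than the one it came from, so there
are at most `(d - 1) ^ ⌊m / 2⌋` such `y`. Summed over `1 ≤ m ≤ t` this stays below
`τ'_t(d) = 1 + ∑_{k < t} (d - 1) ^ (⌊k / 2⌋ + 1)`.
-/

open SimpleGraph

/-- A distance-`t` edge-colouring with `n` colours: distinct edges at distance at most `t-1`
in the line graph (equivalently, joined by a path of fewer than `t` edges) get distinct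
colours. -/
def DistEdgeColorable {V : Type*} (G : SimpleGraph V) (t n : ℕ) : Prop :=
  ∃ c : G.edgeSet → Fin n, ∀ e f : G.edgeSet, e ≠ f →
    G.lineGraph.edist e f ≤ (↑(t - 1) : ℕ∞) → c e ≠ c f

/-- `τ'_t(d)`. -/
def tau' (t d : ℕ) : ℕ :=
  if Even t then (2 * (d - 1) ^ (t / 2 + 1) - d) / (d - 2)
  else (d * (d - 1) ^ ((t + 1) / 2) - d) / (d - 2)

open Finset

namespace SimpleGraph

variable {V : Type*} {G : SimpleGraph V} {r u v w y : V}

theorem colorable_of_forall_card_lt {α β : Type*} [Fintype α] [LinearOrder β]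
    (H : SimpleGraph α) [DecidableRel H.Adj] (κ : α → β) {n : ℕ}
    (h : ∀ a, #{b | H.Adj a b ∧ κ b ≤ κ a} < n) : H.Colorable n := by
  classical
  rcases isEmpty_or_nonempty α with hα | ⟨⟨a₀⟩⟩
  · exact .of_isEmpty n
  suffices ∀ s : Finset α, ∃ c : α → Fin n, ∀ a ∈ s, ∀ b ∈ s, H.Adj a b → c a ≠ c b by
    obtain ⟨c, hc⟩ := this univ
    exact ⟨Coloring.mk c fun hab => hc _ (mem_univ _) _ (mem_univ _) hab⟩
  intro s
  induction s using Finset.induction_on_max_value κ with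
  | empty => exact ⟨fun _ => ⟨0, (h a₀).trans_le' (Nat.zero_le _)⟩, by simp⟩
  | insert a s ha hmax ih =>
    obtain ⟨c, hc⟩ := ih
    have hcard : #({b ∈ s | H.Adj a b}.image c) < #(univ : Finset (Fin n)) := by
      calc #({b ∈ s | H.Adj a b}.image c) ≤ #{b ∈ s | H.Adj a b} := card_image_le
        _ ≤ #{b | H.Adj a b ∧ κ b ≤ κ a} :=
          card_le_card fun b hb => by
            simp only [mem_filter, mem_univ, true_and] at hb ⊢
            exact ⟨hb.2, hmax b hb.1⟩
        _ < _ := by simpa using h a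
    obtain ⟨i, -, hi⟩ := exists_mem_notMem_of_card_lt_card hcard
    have hfree : ∀ b ∈ s, H.Adj a b → i ≠ c b := fun b hb hab heq =>
      hi (mem_image.mpr ⟨b, mem_filter.mpr ⟨hb, hab⟩, heq.symm⟩)
    have hne : ∀ b ∈ s, b ≠ a := fun b hb hba => ha (hba ▸ hb)
    refine ⟨Function.update c a i, ?_⟩
    simp only [mem_insert]
    rintro x (rfl | hx) y (rfl | hy) hxy
    · exact (hxy.ne rfl).elim
    · simpa [hne y hy] using hfree y hy hxy
    · simpa [hne x hx] using (hfree x hx hxy.symm).symm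
    · simpa [hne x hx, hne y hy] using hc x hx y hy hxy

lemma edist_le_one_of_mem_edgeSet {e : Sym2 V} (he : e ∈ G.edgeSet) {x y : V}
    (hx : x ∈ e) (hy : y ∈ e) : G.edist x y ≤ 1 := by
  rcases eq_or_ne x y with rfl | hxy
  · simp
  · rw [(Sym2.mem_and_mem_iff hxy).mp ⟨hx, hy⟩, mem_edgeSet] at he
    exact (edist_eq_one_iff_adj.mpr he).le

lemma edist_le_length_lineGraph_walk_add_one {e f : G.edgeSet} (p : G.lineGraph.Walk e f)
    {x y : V} (hx : x ∈ (e : Sym2 V)) (hy : y ∈ (f : Sym2 V)) :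
    G.edist x y ≤ p.length + 1 := by
  induction p generalizing x with
  | nil => simpa using edist_le_one_of_mem_edgeSet (Subtype.prop _) hx hy
  | cons h q ih =>
    obtain ⟨-, w, hwe, hwg⟩ := lineGraph_adj_iff_exists.mp h
    calc G.edist x y ≤ G.edist x w + G.edist w y := G.edist_triangle
      _ ≤ 1 + (q.length + 1) := add_le_add (edist_le_one_of_mem_edgeSet (Subtype.prop _) hx hwe)
          (ih hwg hy)
      _ = (q.cons h).length + 1 := by push_cast [Walk.length_cons]; ring

def distConflictGraph (G : SimpleGraph V) (t : ℕ) : SimpleGraph G.edgeSet :=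
  fromRel fun e f => G.lineGraph.edist e f ≤ (t - 1 : ℕ)

lemma dist_le_of_distConflictGraph_adj {t : ℕ} {e f : G.edgeSet}
    (h : (G.distConflictGraph t).Adj e f) {x y : V} (hx : x ∈ (e : Sym2 V))
    (hy : y ∈ (f : Sym2 V)) : G.dist x y ≤ t := by
  obtain ⟨hef, h⟩ := h
  replace h : G.lineGraph.edist e f ≤ (t - 1 : ℕ) := h.elim id (edist_comm ▸ ·)
  obtain ⟨p, hp⟩ := exists_walk_of_edist_ne_top (ne_top_of_le_ne_top (ENat.natCast_ne_top _) h)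
  have hlen : p.length ≤ t - 1 := by exact_mod_cast hp ▸ h
  -- `e ≠ f` forces `t ≥ 2`, so the truncated subtraction in `t - 1` is harmless
  have hpos : p.length ≠ 0 := fun h0 => hef (edist_eq_zero_iff.mp (by rw [← hp, h0]; rfl))
  apply ENat.toNat_le_of_le_natCast
  calc G.edist x y ≤ p.length + 1 := edist_le_length_lineGraph_walk_add_one p hx hy
    _ ≤ t := by exact_mod_cast (by omega : p.length + 1 ≤ t)

lemma Connected.exists_adj_dist_add_one (hG : G.Connected) (hv : v ≠ r) :
    ∃ p, G.Adj v p ∧ G.dist r p + 1 = G.dist r v := by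
  obtain ⟨q, hq⟩ := hG.exists_walk_length_eq_dist v r
  cases q with
  | nil => exact absurd rfl hv
  | @cons _ p _ h q =>
    refine ⟨p, h, ?_⟩
    have hle : G.dist p r ≤ q.length := dist_le q
    have htri : G.dist v r ≤ G.dist v p + G.dist p r := hG.dist_triangle
    rw [dist_eq_one_iff_adj.mpr h] at htri
    rw [Walk.length_cons] at hq
    rw [dist_comm, dist_comm (u := r)]
    omega

lemma IsTree.eq_of_adj_of_dist_add_one (hG : G.IsTree) {p q : V} (hp : G.Adj v p)
    (hq : G.Adj v q) (hpv : G.dist r p + 1 = G.dist r v) (hqv : G.dist r q + 1 = G.dist r v) :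
    p = q := by
  obtain ⟨P, hP, -⟩ := (hG.connected r v).exists_path_of_dist
  suffices ∀ p, G.Adj v p → G.dist r p + 1 = G.dist r v → p = P.penultimate from
    (this p hp hpv).trans (this q hq hqv).symm
  intro p hp hpv
  classical
  obtain ⟨Q, hQ, hQl⟩ := (hG.connected r p).exists_path_of_dist
  have hvQ : v ∉ Q.support := fun hv => by
    have := dist_le (Q.takeUntil v hv)
    have := Q.length_takeUntil_le_length hv
    omega
  exact hG.isAcyclic.eq_penultimate_of_adj_end hP hp
    (hG.isAcyclic.mem_support_of_ne_mem_support_of_adj_of_isPath hP hQ hp hvQ)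

lemma IsTree.dist_add_one_of_dist_lt (hG : G.IsTree) {p : V} (hp : G.Adj v p)
    (hpv : G.dist r p + 1 = G.dist r v) (hy : G.dist r y < G.dist r v + G.dist v y) :
    G.dist p y + 1 = G.dist v y := by
  induction hn : G.dist v y generalizing v p with
  | zero => simp [(hG.connected v y).dist_eq_zero_iff.mp hn] at hy
  | succ n ih =>
    obtain ⟨q, hq⟩ := (hG.connected v y).exists_walk_length_eq_dist
    cases q with
    | nil => simp at hn
    | @cons _ w _ h q =>
      have hwy : G.dist w y = n := by
        have := dist_le q
        have : G.dist v y ≤ G.dist v w + G.dist w y := hG.connected.dist_triangle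
        rw [dist_eq_one_iff_adj.mpr h] at this
        simp only [Walk.length_cons] at hq
        omega
      -- a first step down to a child `w` is impossible: from `w` the path would return through `v`
      rcases hG.dist_eq_dist_add_one_of_adj r h with hw | hw
      · rw [hG.eq_of_adj_of_dist_add_one hp h hpv hw.symm, hwy]
      · by_cases hyw : G.dist r y < G.dist r w + G.dist w y
        · have := ih h.symm hw.symm hyw hwy
          omega
        · omega

lemma IsTree.exists_injective_mem_edge (hG : G.IsTree) :
    ∃ low : G.edgeSet → V, Function.Injective low ∧ ∀ e : G.edgeSet, low e ∈ (e : Sym2 V) := by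
  obtain ⟨r⟩ := hG.connected.nonempty
  have hlow : ∀ e : G.edgeSet, ∃ vp : V × V, (e : Sym2 V) = s(vp.1, vp.2) ∧ G.Adj vp.1 vp.2 ∧
      G.dist r vp.2 + 1 = G.dist r vp.1 := by
    rintro ⟨e, he⟩
    induction e using Sym2.ind with
    | _ a b =>
      rcases hG.dist_eq_dist_add_one_of_adj r he with h | h
      · exact ⟨(a, b), rfl, he, h.symm⟩
      · exact ⟨(b, a), Sym2.eq_swap, he.symm, h.symm⟩
  choose vp hvp using hlow
  refine ⟨fun e => (vp e).1, fun e f hef => Subtype.ext ?_, fun e => by simp [(hvp e).1]⟩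
  obtain ⟨he, hadj, hdist⟩ := hvp e
  obtain ⟨hf, hadj', hdist'⟩ := hvp f
  simp only at hef
  rw [he, hf, hef, hG.eq_of_adj_of_dist_add_one hadj (hef ▸ hadj') hdist (hef ▸ hdist')]

section Counting

variable [Fintype V]

noncomputable def childFinset (G : SimpleGraph V) [DecidableRel G.Adj] (r w : V) : Finset V :=
  {z | G.Adj w z ∧ G.dist r z = G.dist r w + 1}

/- Depths are distances from the root `r`. For a child `u` of `w`, the condition
`G.dist u y = m + 1` with `G.dist w y = m` says that `y` is not in the branch through `u`. -/
noncomputable def descendantsAwayFrom (G : SimpleGraph V) (r u w : V) (m : ℕ) : Finset V :=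
  {y | G.dist r y = G.dist r w + m ∧ G.dist w y = m ∧ G.dist u y = m + 1}

noncomputable def sphereAwayFrom (G : SimpleGraph V) (r u w : V) (m j : ℕ) : Finset V :=
  {y | G.dist w y = m ∧ G.dist u y = m + 1 ∧ G.dist r y ≤ G.dist r w + j}

variable [DecidableRel G.Adj]

lemma mem_childFinset {z : V} :
    z ∈ G.childFinset r w ↔ G.Adj w z ∧ G.dist r z = G.dist r w + 1 := by
  simp [childFinset]

lemma Connected.card_childFinset_le (hG : G.Connected) {d : ℕ}
    (hdeg : ∀ v, G.degree v ≤ d) (hr : G.degree r ≤ d - 1) (w : V) :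
    #(G.childFinset r w) ≤ d - 1 := by
  classical
  by_cases hw : w = r
  · subst hw
    calc #(G.childFinset w w) ≤ #(G.neighborFinset w) :=
          card_le_card fun z hz => by simpa using (mem_childFinset.mp hz).1
      _ ≤ d - 1 := by simpa using hr
  · obtain ⟨p, hp, hpw⟩ := hG.exists_adj_dist_add_one hw
    calc #(G.childFinset r w) ≤ #((G.neighborFinset w).erase p) :=
          card_le_card fun z hz => by
            rw [mem_childFinset] at hz
            rw [mem_erase, mem_neighborFinset]
            exact ⟨by rintro rfl; omega, hz.1⟩
      _ ≤ d - 1 := by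
          rw [card_erase_of_mem (by simpa using hp), card_neighborFinset_eq_degree]
          have := hdeg w
          omega

lemma IsTree.exists_degree_le_one (hG : G.IsTree) :
    ∃ r, G.degree r ≤ 1 := by
  rcases subsingleton_or_nontrivial V with hV | hV
  · obtain ⟨r⟩ := hG.connected.nonempty
    refine ⟨r, ?_⟩
    rw [← card_neighborFinset_eq_degree, card_eq_zero.mpr]
    · exact zero_le_one
    · exact eq_empty_of_forall_notMem fun w hw =>
        (G.mem_neighborFinset r w).mp hw |>.ne (Subsingleton.elim r w)
  · obtain ⟨r, hr⟩ := hG.exists_vert_degree_one_of_nontrivial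
    exact ⟨r, hr.le⟩

variable {k : ℕ}

lemma IsTree.card_descendantsAwayFrom_le (hG : G.IsTree)
    (hch : ∀ w, #(G.childFinset r w) ≤ k) (hu : u ∈ G.childFinset r w) (m : ℕ) :
    #(G.descendantsAwayFrom r u w (m + 1)) ≤ (k - 1) * k ^ m := by
  classical
  induction m with
  | zero =>
    calc #(G.descendantsAwayFrom r u w (0 + 1)) ≤ #((G.childFinset r w).erase u) :=
          card_le_card fun y hy => by
            simp only [descendantsAwayFrom, mem_filter, mem_univ, true_and] at hy
            rw [mem_erase, mem_childFinset, ← dist_eq_one_iff_adj]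
            exact ⟨by rintro rfl; simp at hy, hy.2.1, hy.1⟩
      _ ≤ (k - 1) * k ^ 0 := by
          rw [card_erase_of_mem hu, pow_zero, mul_one]
          exact Nat.sub_le_sub_right (hch w) 1
  | succ m ih =>
    rw [mem_childFinset] at hu
    calc #(G.descendantsAwayFrom r u w (m + 1 + 1))
        ≤ #((G.descendantsAwayFrom r u w (m + 1)).biUnion (G.childFinset r)) :=
          card_le_card fun y hy => by
            simp only [descendantsAwayFrom, mem_filter, mem_univ, true_and] at hy
            obtain ⟨hry, hwy, huy⟩ := hy
            have hyr : y ≠ r := by rintro rfl; simp at hry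
            obtain ⟨p, hp, hpy⟩ := hG.connected.exists_adj_dist_add_one hyr
            have hpw := hG.dist_add_one_of_dist_lt (y := w) hp hpy (by
              rw [dist_comm (u := y), hwy]; omega)
            have hpu := hG.dist_add_one_of_dist_lt (y := u) hp hpy (by
              rw [dist_comm (u := y), huy]; omega)
            rw [dist_comm (u := p), dist_comm (u := y), hwy] at hpw
            rw [dist_comm (u := p), dist_comm (u := y), huy] at hpu
            simp only [mem_biUnion, descendantsAwayFrom, mem_filter, mem_univ, true_and,
              mem_childFinset]
            exact ⟨p, ⟨by omega, by omega, by omega⟩, hp.symm, by omega⟩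
      _ ≤ #(G.descendantsAwayFrom r u w (m + 1)) * k :=
          card_biUnion_le_card_mul _ _ _ fun _ _ => hch _
      _ ≤ (k - 1) * k ^ (m + 1) := by rw [pow_succ, ← mul_assoc]; gcongr

lemma IsTree.card_sphereAwayFrom_succ_le (hG : G.IsTree) (hch : ∀ w, #(G.childFinset r w) ≤ k)
    (hu : u ∈ G.childFinset r w) {m j B : ℕ}
    (hB : ∀ p, G.Adj w p → G.dist r p + 1 = G.dist r w → #(G.sphereAwayFrom r w p m (j + 1)) ≤ B) :
    #(G.sphereAwayFrom r u w (m + 1) j) ≤ (if m + 1 ≤ j then (k - 1) * k ^ m else 0) + B := by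
  classical
  set S := G.sphereAwayFrom r u w (m + 1) j
  rw [← card_filter_add_card_filter_not (fun y => G.dist r y = G.dist r w + (m + 1))]
  refine add_le_add ?_ ?_
  · split_ifs with hmj
    · refine (card_le_card fun y hy => ?_).trans (hG.card_descendantsAwayFrom_le hch hu m)
      simp only [S, sphereAwayFrom, descendantsAwayFrom, mem_filter, mem_univ, true_and] at hy ⊢
      exact ⟨hy.2, hy.1.1, hy.1.2.1⟩
    · refine (card_eq_zero.mpr (filter_eq_empty_iff.mpr fun y hy hry => ?_)).le
      simp only [S, sphereAwayFrom, mem_filter, mem_univ, true_and] at hy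
      omega
  · rcases eq_empty_or_nonempty {y ∈ S | G.dist r y ≠ G.dist r w + (m + 1)} with h | ⟨y₀, hy₀⟩
    · simp [h]
    have hw : w ≠ r := by
      rintro rfl
      simp only [S, sphereAwayFrom, mem_filter, mem_univ, true_and, dist_self] at hy₀
      omega
    obtain ⟨p, hp, hpw⟩ := hG.connected.exists_adj_dist_add_one hw
    refine (card_le_card fun y hy => ?_).trans (hB p hp hpw)
    simp only [S, sphereAwayFrom, mem_filter, mem_univ, true_and] at hy ⊢
    obtain ⟨⟨hwy, huy, hry⟩, hne⟩ := hy
    have htri : G.dist r y ≤ G.dist r w + G.dist w y := hG.connected.dist_triangle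
    have := hG.dist_add_one_of_dist_lt hp hpw (by omega : G.dist r y < G.dist r w + G.dist w y)
    omega

/- The path from `w` to `y` climbs `i` levels and then descends `m - i ≤ j + i` levels, and the
descent contributes the factor `k ^ (m - i)`; hence the exponent. -/
lemma IsTree.card_sphereAwayFrom_le (hG : G.IsTree) (hch : ∀ w, #(G.childFinset r w) ≤ k)
    (hu : u ∈ G.childFinset r w) (m j : ℕ) :
    #(G.sphereAwayFrom r u w m j) ≤ k ^ min m ((m + j) / 2) := by
  induction m generalizing u w j with
  | zero =>
    calc #(G.sphereAwayFrom r u w 0 j) ≤ #{w} :=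
          card_le_card fun y hy => by
            simp only [sphereAwayFrom, mem_filter, mem_univ, true_and] at hy
            simpa [eq_comm] using (hG.connected w y).dist_eq_zero_iff.mp hy.1
      _ = k ^ min 0 ((0 + j) / 2) := by simp
  | succ m ih =>
    have hk : 1 ≤ k := (card_pos.mpr ⟨u, hu⟩).trans_le (hch w)
    refine (hG.card_sphereAwayFrom_succ_le hch hu fun p hp hpw =>
      ih (mem_childFinset.mpr ⟨hp.symm, hpw.symm⟩) (j + 1)).trans ?_
    split_ifs with hmj
    · rw [show min m ((m + (j + 1)) / 2) = m by omega,
        show min (m + 1) ((m + 1 + j) / 2) = m + 1 by omega, pow_succ]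
      refine le_of_eq ?_
      calc (k - 1) * k ^ m + k ^ m = (k - 1 + 1) * k ^ m := by ring
        _ = k ^ m * k := by rw [Nat.sub_add_cancel hk, mul_comm]
    · rw [show min m ((m + (j + 1)) / 2) = (m + 1 + j) / 2 by omega,
        show min (m + 1) ((m + 1 + j) / 2) = (m + 1 + j) / 2 by omega, zero_add]

lemma IsTree.card_sphere_le (hG : G.IsTree) (hch : ∀ w, #(G.childFinset r w) ≤ k)
    (v : V) (m : ℕ) : #{y | G.dist v y = m + 1 ∧ G.dist r y ≤ G.dist r v} ≤ k ^ ((m + 1) / 2) := by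
  by_cases hv : v = r
  · subst hv
    refine (card_eq_zero.mpr (filter_eq_empty_iff.mpr fun y _ hy => ?_)).le.trans (Nat.zero_le _)
    rw [dist_self, Nat.le_zero, (hG.connected _ y).dist_eq_zero_iff] at hy
    simp [← hy.2] at hy
  obtain ⟨p, hp, hpv⟩ := hG.connected.exists_adj_dist_add_one hv
  calc #{y | G.dist v y = m + 1 ∧ G.dist r y ≤ G.dist r v}
      ≤ #(G.sphereAwayFrom r v p m 1) := card_le_card fun y hy => by
        simp only [sphereAwayFrom, mem_filter, mem_univ, true_and] at hy ⊢
        have := hG.dist_add_one_of_dist_lt hp hpv (by omega : G.dist r y < G.dist r v + G.dist v y)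
        omega
    _ ≤ k ^ min m ((m + 1) / 2) :=
        hG.card_sphereAwayFrom_le hch (mem_childFinset.mpr ⟨hp.symm, hpv.symm⟩) m 1
    _ = k ^ ((m + 1) / 2) := by rw [min_eq_right (by omega)]

lemma IsTree.card_ball_le [DecidableEq V] (hG : G.IsTree) (hch : ∀ w, #(G.childFinset r w) ≤ k)
    (v : V) (t : ℕ) :
    #{y | y ≠ v ∧ G.dist v y ≤ t ∧ G.dist r y ≤ G.dist r v} ≤ ∑ m ∈ range t, k ^ ((m + 1) / 2) :=
  calc #{y | y ≠ v ∧ G.dist v y ≤ t ∧ G.dist r y ≤ G.dist r v}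
      ≤ #((range t).biUnion fun m => {y | G.dist v y = m + 1 ∧ G.dist r y ≤ G.dist r v}) :=
        card_le_card fun y hy => by
          simp only [mem_filter, mem_univ, true_and, mem_biUnion, mem_range] at hy ⊢
          have := (hG.connected v y).pos_dist_of_ne (Ne.symm hy.1)
          exact ⟨G.dist v y - 1, by omega, by omega, hy.2.2⟩
    _ ≤ ∑ m ∈ range t, #{y | G.dist v y = m + 1 ∧ G.dist r y ≤ G.dist r v} := card_biUnion_le
    _ ≤ ∑ m ∈ range t, k ^ ((m + 1) / 2) := sum_le_sum fun m _ => hG.card_sphere_le hch v m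

end Counting

end SimpleGraph

lemma distEdgeColorable_of_colorable {V : Type*} {G : SimpleGraph V} {t n : ℕ}
    (h : (G.distConflictGraph t).Colorable n) : DistEdgeColorable G t n :=
  let ⟨c⟩ := h
  ⟨c, fun _ _ hef hdist => c.valid ⟨hef, .inl hdist⟩⟩

lemma mul_one_add_sum_pow_half_add (y s : ℕ) :
    y * (1 + ∑ k ∈ Finset.range (2 * s), (y + 1) ^ (k / 2 + 1)) + (y + 2) =
      2 * (y + 1) ^ (s + 1) := by
  induction s with
  | zero => ring
  | succ s ih =>
    rw [show 2 * (s + 1) = 2 * s + 1 + 1 by ring, Finset.sum_range_succ, Finset.sum_range_succ,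
      show (2 * s + 1) / 2 = s by omega, show 2 * s / 2 = s by omega]
    calc _ = y * (1 + ∑ k ∈ Finset.range (2 * s), (y + 1) ^ (k / 2 + 1)) + (y + 2) +
          2 * y * (y + 1) ^ (s + 1) := by ring
      _ = _ := by rw [ih]; ring

lemma tau'_eq {d : ℕ} (hd : 3 ≤ d) (t : ℕ) :
    tau' t d = 1 + ∑ k ∈ Finset.range t, (d - 1) ^ (k / 2 + 1) := by
  obtain ⟨y, rfl⟩ : ∃ y, d = y + 3 := ⟨d - 3, by omega⟩
  have h := mul_one_add_sum_pow_half_add (y + 1)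
  simp only [tau', show y + 3 - 1 = y + 1 + 1 by omega, show y + 3 - 2 = y + 1 by omega]
  obtain ⟨s, rfl | rfl⟩ := Nat.even_or_odd' t
  · rw [if_pos (even_two_mul s), show 2 * s / 2 = s by omega]
    refine Nat.div_eq_of_eq_mul_left (by omega) ?_
    have := h s
    rw [Nat.mul_comm (y + 1)] at this
    omega
  · rw [if_neg (Nat.not_even_two_mul_add_one s), show (2 * s + 1 + 1) / 2 = s + 1 by omega,
      Finset.sum_range_succ, show 2 * s / 2 = s by omega]
    refine Nat.div_eq_of_eq_mul_left (by omega) ?_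
    have := h s
    refine Nat.sub_eq_of_eq_add ?_
    linarith

lemma sum_pow_half_lt_tau' {d : ℕ} (hd : 3 ≤ d) (t : ℕ) :
    ∑ k ∈ Finset.range t, (d - 1) ^ ((k + 1) / 2) < tau' t d := by
  rw [tau'_eq hd, add_comm]
  exact Nat.lt_succ_of_le <|
    Finset.sum_le_sum fun k _ => Nat.pow_le_pow_right (by omega) (by omega)

theorem stmt_3_general {V : Type*} [Fintype V] (G : SimpleGraph V) [DecidableRel G.Adj]
    (t d : ℕ) (hd : 3 ≤ d) (hG : G.IsTree)
    (hdeg : ∀ v, G.degree v ≤ d) :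
    DistEdgeColorable G t (tau' t d) := by
  classical
  obtain ⟨r, hr⟩ := hG.exists_degree_le_one
  obtain ⟨low, hlow_inj, hlow_mem⟩ := hG.exists_injective_mem_edge
  have hch := hG.connected.card_childFinset_le hdeg (hr.trans (by omega))
  refine distEdgeColorable_of_colorable <|
    colorable_of_forall_card_lt _ (fun e => G.dist r (low e)) fun e => ?_
  calc #{f | (G.distConflictGraph t).Adj e f ∧ G.dist r (low f) ≤ G.dist r (low e)}
      ≤ #{y | y ≠ low e ∧ G.dist (low e) y ≤ t ∧ G.dist r y ≤ G.dist r (low e)} := by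
        refine card_le_card_of_injOn low (fun f hf => ?_) hlow_inj.injOn
        simp only [coe_filter, mem_univ, true_and, Set.mem_ofPred] at hf ⊢
        exact ⟨hlow_inj.ne hf.1.ne',
          dist_le_of_distConflictGraph_adj hf.1 (hlow_mem e) (hlow_mem f), hf.2⟩
    _ ≤ ∑ k ∈ range t, (d - 1) ^ ((k + 1) / 2) := hG.card_ball_le hch _ t
    _ < tau' t d := sum_pow_half_lt_tau' hd t

/-- Every finite tree of maximum degree at most `d ≥ 3` has distance-`t`
chromatic index at most `τ'_t(d)` (for `t ≥ 1`). -/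
theorem stmt_3 {V : Type*} [Fintype V] (G : SimpleGraph V) [DecidableRel G.Adj]
    (t d : ℕ) (ht : 1 ≤ t) (hd : 3 ≤ d) (hG : G.IsTree)
    (hdeg : ∀ v, G.degree v ≤ d) :
    DistEdgeColorable G t (tau' t d) :=
  stmt_3_general G t d hd hG hdeg
end

section
/- For even t ≥ 2 and d ≥ 3, there exists a tree G of maximum degree d with exactly τ_t(d) vertices such that every two distinct vertices of G are at distance at most t (i.e., G^t is a clique); consequently χ_t(G) = τ_t(d). -/
/-!
Take for `G` the ball of radius `r = t / 2` around a vertex of the infinite `d`-regular tree.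
Every vertex lies within `r` of the centre, so any two vertices are at distance at most `t`;
hence a distance-`t` colouring must be injective and `χ_t(G) = |G|`. Counting vertices by their
distance from the centre, `(d - 2) |G| + 2 = d (d - 1) ^ r`, which is `τ_t(d)`.

That `G` is a tree is seen through its parent map: when every non-root vertex is one level below
its parent, each edge from a vertex to its parent separates the descendants of that vertex from
the rest of the graph, so every edge is a bridge.
-/

open SimpleGraph

/-- A distance-`t` vertex-colouring with `n` colours. -/
def DistVertexColorable {V : Type*} (G : SimpleGraph V) (t n : ℕ) : Prop :=
  ∃ c : V → Fin n, ∀ u v : V, u ≠ v → G.edist u v ≤ (t : ℕ∞) → c u ≠ c v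

/-- `τ_t(d)` for even `t`. -/
def taueven (t d : ℕ) : ℕ := (d * (d - 1) ^ (t / 2) - 2) / (d - 2)

namespace SimpleGraph

variable {V : Type*}

def parentGraph (par : V → V) : SimpleGraph V := SimpleGraph.fromRel fun u v => par u = v

lemma parentGraph_adj {par : V → V} {u v : V} :
    (parentGraph par).Adj u v ↔ u ≠ v ∧ (par u = v ∨ par v = u) := by
  simp [parentGraph]

lemma parentGraph_neighborSet_subset (par : V → V) (v : V) :
    (parentGraph par).neighborSet v ⊆ insert (par v) (par ⁻¹' {v}) := by
  intro u hu
  rcases (parentGraph_adj.1 hu).2 with rfl | hpu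
  · exact Set.mem_insert _ _
  · exact Set.mem_insert_of_mem _ hpu

/-- Any walk leaving the descendants of `v` crosses the edge from `v` to its parent. -/
lemma parentGraph_mem_edges_of_walk {par : V → V} {v a b : V} (p : (parentGraph par).Walk a b)
    (ha : ∃ k, par^[k] a = v) (hb : ¬ ∃ k, par^[k] b = v) : s(v, par v) ∈ p.edges := by
  induction p with
  | nil => exact absurd ha hb
  | @cons a c b hac p ih =>
    obtain ⟨k, hk⟩ := ha
    rw [Walk.edges_cons, List.mem_cons]
    by_cases hc : ∃ k, par^[k] c = v
    · exact Or.inr (ih hc hb)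
    · left
      rcases (parentGraph_adj.1 hac).2 with hpa | hpc
      · cases k with
        | zero => rw [← hk, Function.iterate_zero_apply, hpa]
        | succ j => exact absurd ⟨j, by rwa [← hpa, ← Function.iterate_succ_apply]⟩ hc
      · exact absurd ⟨k + 1, by rwa [Function.iterate_succ_apply, hpc]⟩ hc

structure IsDepthFunction (par : V → V) (dep : V → ℕ) (root : V) : Prop where
  par_root : par root = root
  dep_par : ∀ v, v ≠ root → dep (par v) + 1 = dep v

namespace IsDepthFunction

variable {par : V → V} {dep : V → ℕ} {root : V} (h : IsDepthFunction par dep root)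
include h

lemma par_ne {v : V} (hv : v ≠ root) : par v ≠ v := by
  intro hpv
  have := h.dep_par v hv
  rw [hpv] at this
  omega

lemma adj_par {v : V} (hv : v ≠ root) : (parentGraph par).Adj v (par v) :=
  parentGraph_adj.2 ⟨(h.par_ne hv).symm, Or.inl rfl⟩

lemma neighborSet_root : (parentGraph par).neighborSet root = par ⁻¹' {root} \ {root} := by
  ext u
  simp only [mem_neighborSet, parentGraph_adj, h.par_root, Set.mem_sdiff, Set.mem_preimage,
    Set.mem_singleton_iff]
  grind

lemma dep_iterate_le (k : ℕ) (v : V) : dep (par^[k] v) ≤ dep v := by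
  induction k generalizing v with
  | zero => rfl
  | succ k ih =>
    rw [Function.iterate_succ_apply]
    refine (ih _).trans ?_
    by_cases hv : v = root
    · rw [hv, h.par_root]
    · exact (h.dep_par v hv).le.trans' (Nat.le_succ _)

lemma iterate_par_ne {v : V} (hv : v ≠ root) (k : ℕ) : par^[k] (par v) ≠ v := by
  intro hk
  have := h.dep_iterate_le k (par v)
  rw [hk, ← h.dep_par v hv] at this
  omega

lemma exists_walk_to_root_length_le (v : V) :
    ∃ w : (parentGraph par).Walk v root, w.length ≤ dep v := by
  induction hn : dep v using Nat.strong_induction_on generalizing v with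
  | _ n ih =>
    by_cases hv : v = root
    · exact ⟨hv ▸ Walk.nil, by subst hv; simp⟩
    · have hdep := h.dep_par v hv
      obtain ⟨w, hw⟩ := ih (dep (par v)) (by omega) (par v) rfl
      exact ⟨Walk.cons (h.adj_par hv) w, by simp only [Walk.length_cons]; omega⟩

lemma reachable_root (v : V) : (parentGraph par).Reachable v root :=
  (h.exists_walk_to_root_length_le v).elim fun w _ => ⟨w⟩

lemma edist_le_dep_add_dep (u v : V) :
    (parentGraph par).edist u v ≤ ((dep u + dep v : ℕ) : ℕ∞) := by
  obtain ⟨wu, hu⟩ := h.exists_walk_to_root_length_le u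
  obtain ⟨wv, hv⟩ := h.exists_walk_to_root_length_le v
  refine (wu.append wv.reverse).edist_le.trans ?_
  rw [Nat.cast_le, Walk.length_append, Walk.length_reverse]
  omega

lemma isBridge {v : V} (hv : v ≠ root) : (parentGraph par).IsBridge s(v, par v) := by
  rw [isBridge_iff_forall_walk_mem_edges]
  exact fun p => parentGraph_mem_edges_of_walk p ⟨0, rfl⟩ fun ⟨k, hk⟩ => h.iterate_par_ne hv k hk

lemma isTree : (parentGraph par).IsTree := by
  have : Nonempty V := ⟨root⟩
  refine ⟨⟨fun u v => (h.reachable_root u).trans (h.reachable_root v).symm⟩, ?_⟩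
  refine isAcyclic_iff_forall_adj_isBridge.2 fun u v huv => ?_
  rcases parentGraph_adj.1 huv with ⟨hne, rfl | rfl⟩
  · exact h.isBridge fun hu => hne (hu ▸ h.par_root.symm)
  · rw [Sym2.eq_swap]
    exact h.isBridge fun hv => hne (hv ▸ h.par_root)

end IsDepthFunction

end SimpleGraph

lemma sInf_distVertexColorable_eq_card {V : Type*} [Finite V] (G : SimpleGraph V) (t : ℕ)
    (hG : ∀ u v : V, u ≠ v → G.edist u v ≤ t) :
    sInf {n | DistVertexColorable G t n} = Nat.card V := by
  have hcolorable : DistVertexColorable G t (Nat.card V) :=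
    ⟨Finite.equivFin V, fun u v huv _ => (Finite.equivFin V).injective.ne huv⟩
  refine le_antisymm (Nat.sInf_le hcolorable) (le_csInf ⟨_, hcolorable⟩ ?_)
  rintro n ⟨c, hc⟩
  have hc_inj : Function.Injective c := fun u v huv => by
    by_contra hne
    exact hc u v hne (hG u v hne) huv
  simpa using Nat.card_le_card_of_injective c hc_inj

abbrev ShortWord (m r : ℕ) : Type := {l : List (Fin m) // l.length < r}

instance (m r : ℕ) : Finite (ShortWord m r) := (List.finite_length_lt (Fin m) r).to_subtype

def ShortWord.consEquiv (m r : ℕ) : ShortWord m (r + 1) ≃ Option (Fin m × ShortWord m r) where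
  toFun
    | ⟨[], _⟩ => none
    | ⟨a :: l, h⟩ => some (a, ⟨l, Nat.lt_of_succ_lt_succ h⟩)
  invFun
    | none => ⟨[], r.succ_pos⟩
    | some (a, ⟨l, h⟩) => ⟨a :: l, Nat.succ_lt_succ h⟩
  left_inv := by rintro ⟨_ | _, _⟩ <;> rfl
  right_inv := by rintro (_ | ⟨_, _, _⟩) <;> rfl

lemma ShortWord.pred_mul_card_add_one {m : ℕ} (hm : 1 ≤ m) (r : ℕ) :
    (m - 1) * Nat.card (ShortWord m r) + 1 = m ^ r := by
  induction r with
  | zero =>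
    have : IsEmpty (ShortWord m 0) := ⟨fun l => Nat.not_lt_zero _ l.2⟩
    simp
  | succ r ih =>
    obtain ⟨m, rfl⟩ := Nat.exists_eq_add_of_le' hm
    rw [Nat.card_congr (consEquiv _ r), Finite.card_option, Nat.card_prod, Nat.card_fin,
      pow_succ, ← ih, Nat.add_sub_cancel]
    ring

/-- The ball of radius `r` around a vertex of the `(m + 1)`-regular tree: `none` is the centre,
and `some (i, l)` is reached from it by the edge `i` followed by the moves of `l` in reverse
order, each move choosing one of the `m` edges leading away from the centre. -/
abbrev BallTree (m r : ℕ) : Type := Option (Fin (m + 1) × ShortWord m r)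

namespace BallTree

variable {m r : ℕ}

def parent : BallTree m r → BallTree m r
  | none => none
  | some (_, ⟨[], _⟩) => none
  | some (i, ⟨_ :: l, h⟩) => some (i, ⟨l, Nat.lt_of_succ_lt h⟩)

def depth : BallTree m r → ℕ
  | none => 0
  | some (_, l) => l.1.length + 1

lemma depth_le (v : BallTree m r) : depth v ≤ r := by
  rcases v with _ | ⟨_, l⟩
  · exact r.zero_le
  · exact l.2

lemma isDepthFunction : IsDepthFunction (parent (m := m) (r := r)) depth none where
  par_root := rfl
  dep_par := by
    rintro (_ | ⟨_, _ | _, _⟩) hv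
    · exact absurd rfl hv
    all_goals rfl

lemma parent_eq_some {u : BallTree m r} {i : Fin (m + 1)} {l : ShortWord m r}
    (h : parent u = some (i, l)) : ∃ j hj, u = some (i, ⟨j :: l.1, hj⟩) := by
  rcases u with _ | ⟨i', _ | ⟨j, l'⟩, hl⟩
  · cases h
  · cases h
  · cases h
    exact ⟨j, hl, rfl⟩

lemma preimage_parent_none (hr : 0 < r) :
    parent ⁻¹' {none} \ {none} = Set.range fun i => (some (i, ⟨[], hr⟩) : BallTree m r) := by
  ext u
  rcases u with _ | ⟨i, _ | ⟨j, l⟩, hl⟩ <;> simp [parent]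

def child (i : Fin (m + 1)) (l : ShortWord m r) (j : Fin m) : BallTree m r :=
  if h : l.1.length + 1 < r then some (i, ⟨j :: l.1, h⟩) else none

lemma preimage_parent_some_subset (i : Fin (m + 1)) (l : ShortWord m r) :
    parent ⁻¹' {some (i, l)} ⊆ Set.range (child i l) := by
  intro u hu
  obtain ⟨j, hj, rfl⟩ := parent_eq_some hu
  exact ⟨j, dif_pos hj⟩

lemma ncard_neighborSet_none (hr : 0 < r) :
    ((parentGraph parent).neighborSet (none : BallTree m r)).ncard = m + 1 := by
  rw [isDepthFunction.neighborSet_root, preimage_parent_none hr,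
    Set.ncard_range_of_injective fun i i' h => (Prod.ext_iff.1 (Option.some.inj h)).1,
    Nat.card_fin]

lemma ncard_neighborSet_le (v : BallTree m r) :
    ((parentGraph parent).neighborSet v).ncard ≤ m + 1 := by
  rcases v with _ | ⟨i, l⟩
  · rcases r.eq_zero_or_pos with rfl | hr
    · suffices (parentGraph parent).neighborSet (none : BallTree m 0) = ∅ by simp [this]
      refine Set.eq_empty_of_forall_notMem fun u hu => ?_
      rcases u with _ | ⟨_, l⟩
      · exact (parentGraph parent).loopless.irrefl _ hu
      · exact Nat.not_lt_zero _ l.2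
    · exact (ncard_neighborSet_none hr).le
  calc _ ≤ (insert (parent (some (i, l))) (parent ⁻¹' {some (i, l)})).ncard :=
        Set.ncard_le_ncard (parentGraph_neighborSet_subset _ _)
    _ ≤ (parent ⁻¹' {some (i, l)}).ncard + 1 := Set.ncard_insert_le _ _
    _ ≤ (Set.range (child i l)).ncard + 1 := by
        gcongr
        · exact Set.toFinite _
        · exact preimage_parent_some_subset i l
    _ ≤ m + 1 := by
        gcongr
        rw [← Nat.card_coe_set_eq]
        simpa using Finite.card_range_le (child i l)

lemma edist_le (u v : BallTree m r) : (parentGraph parent).edist u v ≤ ((r + r : ℕ) : ℕ∞) :=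
  (isDepthFunction.edist_le_dep_add_dep u v).trans <|
    Nat.cast_le.2 (Nat.add_le_add (depth_le u) (depth_le v))

lemma card_eq_taueven (hm : 2 ≤ m) : Nat.card (BallTree m r) = taueven (r + r) (m + 1) := by
  have hcard : Nat.card (BallTree m r) = (m + 1) * Nat.card (ShortWord m r) + 1 := by
    rw [Finite.card_option, Nat.card_prod, Nat.card_fin]
  have hwords := ShortWord.pred_mul_card_add_one (by omega : 1 ≤ m) r
  have hkey : (m - 1) * Nat.card (BallTree m r) + 2 = (m + 1) * m ^ r := by
    obtain ⟨e, rfl⟩ := Nat.exists_eq_add_of_le' hm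
    rw [hcard, ← hwords, show e + 2 - 1 = e + 1 by omega]
    ring
  rw [taueven, show (r + r) / 2 = r by omega, Nat.add_sub_cancel, show m + 1 - 2 = m - 1 by omega,
    ← hkey, Nat.add_sub_cancel, Nat.mul_div_cancel_left _ (by omega)]

end BallTree

/-- For even `t ≥ 2` and `d ≥ 3` there is a tree `G` of maximum degree `d` with
exactly `τ_t(d)` vertices such that any two distinct vertices are at distance at most `t`
(i.e. `G^t` is a clique); consequently `χ_t(G) = τ_t(d)`. -/
theorem stmt_6 (t d : ℕ) (ht : Even t) (ht2 : 2 ≤ t) (hd : 3 ≤ d) :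
    ∃ (V : Type) (_ : Finite V) (G : SimpleGraph V),
      G.IsTree ∧ (∀ v, (G.neighborSet v).ncard ≤ d) ∧ (∃ v, (G.neighborSet v).ncard = d) ∧
      Nat.card V = taueven t d ∧
      (∀ u v : V, u ≠ v → G.edist u v ≤ (t : ℕ∞)) ∧
      sInf {n | DistVertexColorable G t n} = taueven t d := by
  obtain ⟨r, rfl⟩ := ht
  obtain ⟨m, rfl⟩ : ∃ m, d = m + 1 := ⟨d - 1, by omega⟩
  have hdist (u v : BallTree m r) (_ : u ≠ v) := BallTree.edist_le u v
  refine ⟨BallTree m r, inferInstance, parentGraph BallTree.parent,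
    BallTree.isDepthFunction.isTree, BallTree.ncard_neighborSet_le,
    ⟨none, BallTree.ncard_neighborSet_none (by omega)⟩, BallTree.card_eq_taueven (by omega),
    hdist, ?_⟩
  rw [sInf_distVertexColorable_eq_card _ _ hdist, BallTree.card_eq_taueven (by omega)]
end

section
/- Let H be a simple planar graph such that any two disjoint edges of H are joined by an edge of H (i.e., L(H)^2 is a clique). Then the maximum matching number of H is at most 4. -/
open SimpleGraph

/-- `H` is a minor of `G`. -/
def IsMinorOf {W V : Type*} (H : SimpleGraph W) (G : SimpleGraph V) : Prop :=
  ∃ f : V → Option W,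
    (∀ w : W, ∃ v, f v = some w) ∧
    (∀ w : W, (G.induce {v | f v = some w}).Connected) ∧
    (∀ w₁ w₂ : W, H.Adj w₁ w₂ →
      ∃ v₁ v₂, f v₁ = some w₁ ∧ f v₂ = some w₂ ∧ G.Adj v₁ v₂)

/-- Planarity, via Wagner's theorem: no `K₅` minor and no `K_{3,3}` minor. -/
def IsPlanar {V : Type*} (G : SimpleGraph V) : Prop :=
  ¬ IsMinorOf (completeGraph (Fin 5)) G ∧
  ¬ IsMinorOf (completeBipartiteGraph (Fin 3) (Fin 3)) G

/-- If `H` is a simple planar graph in which any two disjoint edges are joined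
by an edge of `H` (i.e. `L(H)²` is a clique), then every matching of `H` has at most `4`
edges. -/
theorem stmt_8 {V : Type*} [Finite V] (H : SimpleGraph V)
    (hplanar : IsPlanar H)
    (hclique : ∀ e ∈ H.edgeSet, ∀ f ∈ H.edgeSet,
      (∀ v, ¬ (v ∈ e ∧ v ∈ f)) → ∃ a b, a ∈ e ∧ b ∈ f ∧ H.Adj a b)
    (s : Finset (Sym2 V)) (hs : ∀ e ∈ s, e ∈ H.edgeSet)
    (hmatching : (s : Set (Sym2 V)).Pairwise fun e f => ∀ v, ¬ (v ∈ e ∧ v ∈ f)) :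
    s.card ≤ 4 := by
  classical
  by_contra hcard
  push_neg at hcard
  apply hplanar.1
  obtain ⟨t, hts, htcard⟩ := Finset.exists_subset_card_eq (Nat.succ_le_of_lt hcard)
  set g : Fin 5 → Sym2 V := fun i => ((t.equivFinOfCardEq htcard).symm i : Sym2 V) with hg
  have hginj : Function.Injective g := by
    intro i j hij
    exact (t.equivFinOfCardEq htcard).symm.injective (Subtype.ext hij)
  have hgs : ∀ i, g i ∈ s := fun i => hts ((t.equivFinOfCardEq htcard).symm i).2
  have hrep : ∀ i : Fin 5, ∃ a b : V, g i = s(a, b) := by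
    intro i
    obtain ⟨⟨a, b⟩, hab⟩ := Quot.exists_rep (g i)
    exact ⟨a, b, hab.symm⟩
  choose a b hab using hrep
  have hadj : ∀ i, H.Adj (a i) (b i) := by
    intro i
    have := hs _ (hgs i)
    rw [hab i] at this
    exact this
  have hmem : ∀ i v, v ∈ g i ↔ v = a i ∨ v = b i := by
    intro i v; rw [hab i, Sym2.mem_iff]
  have huniq : ∀ i j v, v ∈ g i → v ∈ g j → i = j := by
    intro i j v hi hj
    by_contra hne
    exact hmatching (hgs i) (hgs j) (fun h => hne (hginj h)) v ⟨hi, hj⟩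
  set f : V → Option (Fin 5) := fun v =>
    if h : ∃ i, v ∈ g i then some h.choose else none with hf
  have hfspec : ∀ v i, f v = some i ↔ v ∈ g i := by
    intro v i
    constructor
    · intro h
      simp only [hf] at h
      split_ifs at h with hex
      have := hex.choose_spec
      rw [Option.some_inj] at h
      rwa [h] at this
    · intro h
      have hex : ∃ i, v ∈ g i := ⟨i, h⟩
      simp only [hf, dif_pos hex, Option.some_inj]
      exact huniq _ _ _ hex.choose_spec h
  refine ⟨f, ?_, ?_, ?_⟩
  · intro w
    exact ⟨a w, (hfspec _ _).2 ((hmem w (a w)).2 (Or.inl rfl))⟩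
  · intro w
    have hmem' : ∀ v, v ∈ {v | f v = some w} ↔ v = a w ∨ v = b w := by
      intro v; rw [Set.mem_setOf_eq, hfspec, hmem]
    haveI : Nonempty {v | f v = some w} := ⟨⟨a w, (hmem' _).2 (Or.inl rfl)⟩⟩
    constructor
    rintro ⟨u, hu⟩ ⟨v, hv⟩
    have hu' := (hmem' u).1 hu
    have hv' := (hmem' v).1 hv
    have haw : a w ∈ {v | f v = some w} := (hmem' _).2 (Or.inl rfl)
    have hbw : b w ∈ {v | f v = some w} := (hmem' _).2 (Or.inr rfl)
    have hreach : (H.induce {v | f v = some w}).Reachable ⟨a w, haw⟩ ⟨b w, hbw⟩ :=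
      SimpleGraph.Adj.reachable (by exact hadj w)
    rcases hu' with hu' | hu' <;> rcases hv' with hv' | hv' <;> subst hu' <;> subst hv'
    · rfl
    · exact hreach
    · exact hreach.symm
    · rfl
  · intro w₁ w₂ hw
    have hne : w₁ ≠ w₂ := by simpa [completeGraph] using hw
    have hdisj : ∀ v, ¬ (v ∈ g w₁ ∧ v ∈ g w₂) := by
      rintro v ⟨h1, h2⟩
      exact hne (huniq _ _ _ h1 h2)
    obtain ⟨x, y, hx, hy, hxy⟩ := hclique _ (hs _ (hgs w₁)) _ (hs _ (hgs w₂)) hdisj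
    exact ⟨x, y, (hfspec _ _).2 hx, (hfspec _ _).2 hy, hxy⟩
end

section
/- Let G be a simple graph such that L(G)^2 is a clique, and let U ⊆ V(G). Then G − U has at most one connected component containing an edge. -/
open SimpleGraph

/-- If `G` is a simple graph such that `L(G)²` is a clique (any two distinct
edges share an endpoint or are joined by an edge) and `U ⊆ V(G)`, then `G − U` has at most
one connected component containing an edge: any two edges of `G − U` lie in a common
component. -/
theorem stmt_9 {V : Type*} (G : SimpleGraph V)
    (hclique : ∀ e ∈ G.edgeSet, ∀ f ∈ G.edgeSet, e ≠ f →
      (∃ v, v ∈ e ∧ v ∈ f) ∨ ∃ a b, a ∈ e ∧ b ∈ f ∧ G.Adj a b)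
    (U : Set V) :
    ∀ a b c d : ↥(Uᶜ), (G.induce Uᶜ).Adj a b → (G.induce Uᶜ).Adj c d →
      (G.induce Uᶜ).Reachable a c := by
  intro a b c d hab hcd
  have hab' : G.Adj ↑a ↑b := hab
  have hcd' : G.Adj ↑c ↑d := hcd
  -- reach from a to any of {a,b}, from {c,d} to c
  have reachL : ∀ x : V, x = ↑a ∨ x = ↑b → ∀ (hx : x ∈ Uᶜ),
      (G.induce Uᶜ).Reachable a ⟨x, hx⟩ := by
    intro x hx hx'
    rcases hx with h | h
    · subst h; rfl
    · subst h; exact (hab).reachable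
  have reachR : ∀ y : V, y = ↑c ∨ y = ↑d → ∀ (hy : y ∈ Uᶜ),
      (G.induce Uᶜ).Reachable (⟨y, hy⟩ : ↥(Uᶜ)) c := by
    intro y hy hy'
    rcases hy with h | h
    · subst h; rfl
    · subst h
      have : (G.induce Uᶜ).Adj c d := hcd
      exact (this.symm).reachable
  by_cases heq : s(↑a, ↑b) = s((↑c : V), ↑d)
  · rw [Sym2.eq_iff] at heq
    rcases heq with ⟨h1, h2⟩ | ⟨h1, h2⟩
    · have : a = c := Subtype.ext h1
      subst this
      exact Reachable.refl a
    · -- a = d, b = c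
      have : a = d := Subtype.ext h1
      subst this
      exact hcd.symm.reachable
  · rcases hclique _ hab' _ hcd' heq with ⟨v, hv1, hv2⟩ | ⟨x, y, hx, hy, hxy⟩
    · rw [Sym2.mem_iff] at hv1 hv2
      have hv : v ∈ Uᶜ := by
        rcases hv1 with h | h
        · exact h ▸ a.2
        · exact h ▸ b.2
      exact (reachL v hv1 hv).trans (reachR v hv2 hv)
    · rw [Sym2.mem_iff] at hx hy
      have hxU : x ∈ Uᶜ := by
        rcases hx with h | h
        · exact h ▸ a.2
        · exact h ▸ b.2
      have hyU : y ∈ Uᶜ := by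
        rcases hy with h | h
        · exact h ▸ c.2
        · exact h ▸ d.2
      have hmid : (G.induce Uᶜ).Adj ⟨x, hxU⟩ ⟨y, hyU⟩ := hxy
      exact ((reachL x hx hxU).trans hmid.reachable).trans (reachR y hy hyU)
end
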